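/- Define vN : ℕ → ℕ by vN 0 = 0 and vN (n+1) = vN n + 2^(vN n). Then for all n, k : ℕ, one has k ∈_Ack vN n if and only if there exists m < n with k = vN m. In other words, vN n is the Ackermann code of the n-th von Neumann ordinal: its ∈_Ack-elements are exactly vN 0, …, vN (n−1). -/

import Mathlib

/-- `vN n` is the Ackermann code of the `n`-th von Neumann ordinal:
`vN 0 = 0`, `vN (n+1) = vN n + 2 ^ vN n`. -/
def vN : ℕ → ℕ
  | 0 => 0
  | n + 1 => vN n + 2 ^ vN n

lemma vN_mono : Monotone vN := by
  apply monotone_nat_of_le_succ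
  intro n
  simp [vN]

theorem mem_ack_vN :
    ∀ n k : ℕ, Nat.testBit (vN n) k = true ↔ ∃ m < n, k = vN m := by
  intro n
  induction n with
  | zero => simp [vN]
  | succ n ih =>
    intro k
    have hlt : vN n < 2 ^ vN n := Nat.lt_two_pow_self
    rcases lt_trichotomy k (vN n) with hk | hk | hk
    · rw [show vN (n+1) = 2 ^ vN n + vN n by simp [vN, Nat.add_comm],
        Nat.testBit_two_pow_add_gt hk, ih]
      constructor
      · rintro ⟨m, hm, rfl⟩; exact ⟨m, Nat.lt_succ_of_lt hm, rfl⟩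
      · rintro ⟨m, hm, rfl⟩
        rcases Nat.lt_succ_iff_lt_or_eq.1 hm with h | rfl
        · exact ⟨m, h, rfl⟩
        · exact absurd hk (lt_irrefl _)
    · subst hk
      rw [show vN (n+1) = 2 ^ vN n + vN n by simp [vN, Nat.add_comm],
        Nat.testBit_two_pow_add_eq, Nat.testBit_lt_two_pow hlt]
      exact iff_of_true rfl ⟨n, Nat.lt_succ_self n, rfl⟩
    · have : vN (n+1) < 2 ^ k := by
        calc vN (n+1) = vN n + 2 ^ vN n := rfl
        _ < 2 ^ vN n + 2 ^ vN n := by omega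
        _ = 2 ^ (vN n + 1) := by ring
        _ ≤ 2 ^ k := Nat.pow_le_pow_right (by norm_num) hk
      rw [Nat.testBit_lt_two_pow this]
      refine iff_of_false (by simp) ?_
      rintro ⟨m, hm, rfl⟩
      exact absurd (vN_mono (Nat.lt_succ_iff.1 hm)) (not_le.2 hk)
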